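/- Let (X, 𝒜) be a measurable space. A subset M of M(X) is a fixed maximal ideal of M(X) if and only if there exists a prime order ideal P of the lattice of measurable sets of X such that the union ⋃P of all members of P is a proper subset of X and M = M^P. -/
import Mathlib


open Set

/-- The ring of all real-valued measurable functions on a measurable space `X`,
as a subring of the pointwise ring `X → ℝ`. -/
def Mring (X : Type*) [MeasurableSpace X] : Subring (X → ℝ) where
  carrier := {f | Measurable f}
  mul_mem' hf hg := hf.mul hg
  one_mem' := measurable_one
  add_mem' hf hg := hf.add hg
  zero_mem' := measurable_zero
  neg_mem' hf := hf.neg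

/-- The zero-set of a measurable function. -/
def zset {X : Type*} [MeasurableSpace X] (f : Mring X) : Set X :=
  {x | (f : X → ℝ) x = 0}

/-- The cozero-set of a measurable function. -/
def coz {X : Type*} [MeasurableSpace X] (f : Mring X) : Set X :=
  {x | (f : X → ℝ) x ≠ 0}

/-- Evaluation at a point as a ring hom. -/
def evx {X : Type*} [MeasurableSpace X] (x : X) : Mring X →+* ℝ :=
  (Pi.evalRingHom (fun _ => ℝ) x).comp (Mring X).subtype

lemma evx_surj {X : Type*} [MeasurableSpace X] (x : X) : Function.Surjective (evx x) :=
  fun c => ⟨⟨fun _ => c, measurable_const⟩, rfl⟩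

lemma coz_measurable {X : Type*} [MeasurableSpace X] (f : Mring X) :
    MeasurableSet (coz f) :=
  f.2 (measurableSet_singleton (0:ℝ)).compl

lemma zset_measurable {X : Type*} [MeasurableSpace X] (f : Mring X) :
    MeasurableSet (zset f) :=
  f.2 (measurableSet_singleton (0:ℝ))

/-- An order ideal of the lattice of measurable sets of `X` (ordered by
inclusion): a nonempty collection of measurable sets closed under binary
unions and downward closed within measurable sets. -/
def IsLatIdeal {X : Type*} [MeasurableSpace X] (I : Set (Set X)) : Prop :=
  I.Nonempty ∧ (∀ A ∈ I, MeasurableSet A) ∧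
    (∀ A ∈ I, ∀ B ∈ I, A ∪ B ∈ I) ∧
    (∀ B ∈ I, ∀ A : Set X, MeasurableSet A → A ⊆ B → A ∈ I)

/-- A prime order ideal of the lattice of measurable sets: a proper order
ideal (not containing `X`) such that whenever the intersection of two
measurable sets lies in it, one of them does. -/
def IsPrimeLatIdeal {X : Type*} [MeasurableSpace X] (I : Set (Set X)) : Prop :=
  IsLatIdeal I ∧ Set.univ ∉ I ∧
    ∀ A B : Set X, MeasurableSet A → MeasurableSet B → A ∩ B ∈ I → A ∈ I ∨ B ∈ I

/-- A subset `M` of `M(X)` is a fixed maximal ideal iff there is a prime order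
ideal `P` of the lattice of measurable sets with `⋃₀ P ⊊ X` and `M = M^P`. -/
theorem stmt_11 {X : Type*} [MeasurableSpace X] (M : Set (Mring X)) :
    (∃ I : Ideal (Mring X), I.IsMaximal ∧ (I : Set (Mring X)) = M ∧
        (⋂ f ∈ I, zset f).Nonempty) ↔
      ∃ P : Set (Set X), IsPrimeLatIdeal P ∧ ⋃₀ P ≠ Set.univ ∧
        M = {f : Mring X | coz f ∈ P} := by
  constructor
  · rintro ⟨I, hI, hIM, ⟨x, hx⟩⟩
    simp only [mem_iInter] at hx
    have hker : (RingHom.ker (evx x)).IsMaximal :=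
      RingHom.ker_isMaximal_of_surjective _ (evx_surj x)
    have heq : I = RingHom.ker (evx x) := by
      refine hI.eq_of_le hker.ne_top ?_
      intro f hf
      exact hx f hf
    refine ⟨{A : Set X | MeasurableSet A ∧ x ∉ A}, ⟨⟨⟨∅, MeasurableSet.empty, notMem_empty x⟩,
      fun A hA => hA.1, fun A hA B hB => ⟨hA.1.union hB.1, by
        simp [hA.2, hB.2]⟩,
      fun B hB A hAm hAB => ⟨hAm, fun hxA => hB.2 (hAB hxA)⟩⟩,
      fun h => h.2 (mem_univ x),
      fun A B hAm hBm hAB => by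
        by_cases hxA : x ∈ A
        · exact Or.inr ⟨hBm, fun hxB => hAB.2 ⟨hxA, hxB⟩⟩
        · exact Or.inl ⟨hAm, hxA⟩⟩, ?_, ?_⟩
    · intro h
      have : x ∈ ⋃₀ {A : Set X | MeasurableSet A ∧ x ∉ A} := h ▸ mem_univ x
      obtain ⟨A, hA, hxA⟩ := this
      exact hA.2 hxA
    · rw [← hIM, heq]
      ext f
      simp only [SetLike.mem_coe, RingHom.mem_ker, mem_setOf_eq]
      constructor
      · intro hf
        exact ⟨coz_measurable f, fun h => h hf⟩
      · intro ⟨_, h⟩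
        by_contra hne
        exact h hne
  · rintro ⟨P, ⟨⟨⟨B0, hB0⟩, hmeas, hunion, hdown⟩, huniv, hprime⟩, hU, hM⟩
    have hx : ∃ x, x ∉ ⋃₀ P := by
      by_contra h
      push_neg at h
      exact hU (eq_univ_of_forall h)
    obtain ⟨x, hx⟩ := hx
    have hempty : (∅ : Set X) ∈ P :=
      hdown B0 hB0 ∅ MeasurableSet.empty (empty_subset _)
    have key : ∀ f : Mring X, coz f ∈ P ↔ (f : X → ℝ) x = 0 := by
      intro f
      constructor
      · intro h
        by_contra hne
        exact hx ⟨coz f, h, hne⟩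
      · intro h
        have hint : coz f ∩ zset f = ∅ := by
          ext y
          simp [coz, zset]
        rcases hprime (coz f) (zset f) (coz_measurable f) (zset_measurable f)
          (hint ▸ hempty) with h1 | h2
        · exact h1
        · exact absurd ⟨zset f, h2, h⟩ hx
    refine ⟨RingHom.ker (evx x), RingHom.ker_isMaximal_of_surjective _ (evx_surj x), ?_, ⟨x, ?_⟩⟩
    · rw [hM]
      ext f
      simp only [SetLike.mem_coe, RingHom.mem_ker, mem_setOf_eq, key f]
      rfl
    · simp only [mem_iInter]
      intro f hf
      exact hf
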